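/- arXiv:0712.0401 — 2 statements merged into one kernel-verified Lean document; each statement's English description precedes it below -/
import Mathlib

section
/- Let F be a continuous bounded complex-valued function on the closed strip {z ∈ ℂ : 0 ≤ Im z ≤ 1}, holomorphic on the open strip {0 < Im z < 1}, and satisfying F(x) = F(x + i) for all x ∈ ℝ. Then F is constant. -/
/-!
Extend `F` to all of `ℂ` with period `i` by `z ↦ F (z - ⌊Im z⌋ i)`. The boundary periodicity makes
the pieces agree along the lines `Im z ∈ ℤ`, so the extension is continuous, and it is holomorphic
off these lines. A continuous function that is holomorphic off a horizontal line is holomorphic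
across it, by Morera's theorem: cutting a rectangle along the line leaves two rectangles whose
interiors avoid it, and Cauchy–Goursat only needs continuity on their boundaries. The extension is
thus a bounded entire function, hence constant by Liouville's theorem.
-/

open Complex Set Filter intervalIntegral
open scoped Interval

namespace Complex

variable {E : Type*} [NormedAddCommGroup E] [NormedSpace ℂ E]

theorem wedgeIntegral_add_wedgeIntegral_split {f : ℂ → E} (hf : Continuous f) (z w : ℂ) (r : ℝ) :
    wedgeIntegral z w f + wedgeIntegral w z f =
      (wedgeIntegral z (w.re + r * I) f + wedgeIntegral (w.re + r * I) z f) +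
      (wedgeIntegral (z.re + r * I) w f + wedgeIntegral w (z.re + r * I) f) := by
  have hv : ∀ x : ℝ, (∫ y in z.im..r, f (x + y * I)) + ∫ y in r..w.im, f (x + y * I) =
      ∫ y in z.im..w.im, f (x + y * I) := fun x =>
    have hc : Continuous fun y : ℝ => f (x + y * I) := by fun_prop
    integral_add_adjacent_intervals (hc.intervalIntegrable _ _) (hc.intervalIntegrable _ _)
  simp only [wedgeIntegral_add_wedgeIntegral_eq, add_re, ofReal_re, mul_re, I_re, mul_zero,
    ofReal_im, I_im, mul_one, sub_self, add_zero, add_im, mul_im, zero_add]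
  rw [← hv w.re, ← hv z.re, smul_add, smul_add]
  abel

theorem wedgeIntegral_add_wedgeIntegral_eq_zero_of_differentiableOn_diff_im_eq {f : ℂ → E}
    (hf : Continuous f) {U : Set ℂ} {r : ℝ} (hd : DifferentiableOn ℂ f (U \ {z | z.im = r}))
    {z w : ℂ} (hzw : Rectangle z w ⊆ U) (hr : r ∉ Ioo (min z.im w.im) (max z.im w.im)) :
    wedgeIntegral z w f + wedgeIntegral w z f = 0 := by
  rw [wedgeIntegral_add_wedgeIntegral_eq]
  refine integral_boundary_rect_eq_zero_of_continuousOn_of_differentiableOn f z w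
    hf.continuousOn (hd.mono fun u hu => ⟨hzw ?_, ?_⟩)
  · exact ⟨Ioo_subset_Icc_self hu.1, Ioo_subset_Icc_self hu.2⟩
  · rintro (h : u.im = r)
    exact hr (h ▸ hu.2)

theorem isConservativeOn_of_differentiableOn_diff_im_eq {f : ℂ → E}
    (hf : Continuous f) {U : Set ℂ} {r : ℝ} (hd : DifferentiableOn ℂ f (U \ {z | z.im = r})) :
    IsConservativeOn f U := by
  intro z w hzw
  rw [← add_eq_zero_iff_eq_neg]
  by_cases hr : r ∈ Ioo (min z.im w.im) (max z.im w.im)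
  · have hr' : r ∈ [[z.im, w.im]] := Ioo_subset_Icc_self hr
    have lower : Rectangle z (w.re + r * I) ⊆ Rectangle z w := by
      refine reProdIm_subset_iff'.2 (Or.inl ⟨?_, uIcc_subset_uIcc left_mem_uIcc ?_⟩) <;>
        simp [hr']
    have upper : Rectangle (z.re + r * I) w ⊆ Rectangle z w := by
      refine reProdIm_subset_iff'.2 (Or.inl ⟨?_, uIcc_subset_uIcc ?_ right_mem_uIcc⟩) <;>
        simp [hr']
    rw [wedgeIntegral_add_wedgeIntegral_split hf z w r,
      wedgeIntegral_add_wedgeIntegral_eq_zero_of_differentiableOn_diff_im_eq hf hd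
        (lower.trans hzw) (by simpa using le_of_lt),
      wedgeIntegral_add_wedgeIntegral_eq_zero_of_differentiableOn_diff_im_eq hf hd
        (upper.trans hzw) (by simpa using le_of_lt),
      add_zero]
  · exact wedgeIntegral_add_wedgeIntegral_eq_zero_of_differentiableOn_diff_im_eq hf hd hzw hr

theorem differentiableOn_of_differentiableOn_diff_im_eq [CompleteSpace E] {f : ℂ → E}
    (hf : Continuous f) {U : Set ℂ} (hU : IsOpen U) {r : ℝ}
    (hd : DifferentiableOn ℂ f (U \ {z | z.im = r})) : DifferentiableOn ℂ f U :=
  (isConservativeOn_and_continuousOn_iff_isDifferentiableOn hU).1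
    ⟨isConservativeOn_of_differentiableOn_diff_im_eq hf hd, hf.continuousOn⟩

end Complex

section PeriodicExtension

variable {α E : Type*} [NormedAddCommGroup E] [NormedSpace ℂ E]

noncomputable def periodicExtension (F : ℂ → α) (z : ℂ) : α := F (z - ⌊z.im⌋ * I)

theorem periodicExtension_eq_of_mem_Ico (F : ℂ → α) {z : ℂ} {m : ℤ}
    (hz : z.im ∈ Ico (m : ℝ) (m + 1)) : periodicExtension F z = F (z - m * I) := by
  rw [periodicExtension, Int.floor_eq_iff.2 hz]

theorem periodicExtension_eq_of_mem_Icc {F : ℂ → α} (hper : ∀ x : ℝ, F x = F (x + I)) {z : ℂ}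
    {m : ℤ} (hz : z.im ∈ Icc (m : ℝ) (m + 1)) : periodicExtension F z = F (z - m * I) := by
  rcases hz.2.lt_or_eq with hlt | heq
  · exact periodicExtension_eq_of_mem_Ico F ⟨hz.1, hlt⟩
  · have hz' : z.im ∈ Ico ((m + 1 : ℤ) : ℝ) ((m + 1 : ℤ) + 1) := by push_cast; simp [heq]
    rw [periodicExtension_eq_of_mem_Ico F hz']
    convert hper z.re using 2 <;> apply Complex.ext <;> simp [heq]

theorem range_periodicExtension_subset (F : ℂ → α) :
    range (periodicExtension F) ⊆ F '' (im ⁻¹' Icc 0 1) := by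
  rintro _ ⟨z, rfl⟩
  refine ⟨z - ⌊z.im⌋ * I, ?_, rfl⟩
  simp only [mem_preimage, sub_im, mul_im, intCast_re, I_im, mul_one, intCast_im, I_re,
    mul_zero, add_zero, mem_Icc, sub_nonneg]
  exact ⟨Int.floor_le _, by linarith [Int.lt_floor_add_one z.im]⟩

theorem locallyFinite_im_preimage_Icc_intCast :
    LocallyFinite fun m : ℤ => im ⁻¹' Icc (m : ℝ) (m + 1) :=
  (locallyFinite_Icc_of_tendsto tendsto_intCast_atTop_atTop
    (tendsto_atBot_add_const_right _ 1 (tendsto_intCast_atBot_iff.2 tendsto_id))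
    ).preimage_continuous continuous_im

theorem continuous_periodicExtension [TopologicalSpace α] {F : ℂ → α}
    (hc : ContinuousOn F (im ⁻¹' Icc 0 1)) (hper : ∀ x : ℝ, F x = F (x + I)) :
    Continuous (periodicExtension F) := by
  refine locallyFinite_im_preimage_Icc_intCast.continuous ?_
    (fun m => isClosed_Icc.preimage continuous_im) fun m => ?_
  · exact eq_univ_of_forall fun z => mem_iUnion.2
      ⟨⌊z.im⌋, Int.floor_le _, (Int.lt_floor_add_one _).le⟩
  · refine (hc.comp (continuous_sub_right _).continuousOn fun z hz => ?_).congr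
      fun z hz => periodicExtension_eq_of_mem_Icc hper hz
    obtain ⟨h₁, h₂⟩ := hz
    simp only [mem_preimage, sub_im, mul_im, intCast_re, I_im, mul_one, intCast_im, I_re,
      mul_zero, add_zero, mem_Icc]
    constructor <;> linarith

theorem differentiableOn_periodicExtension {F : ℂ → E}
    (hd : DifferentiableOn ℂ F (im ⁻¹' Ioo 0 1)) (m : ℤ) :
    DifferentiableOn ℂ (periodicExtension F) (im ⁻¹' Ioo (m : ℝ) (m + 1)) := by
  refine (hd.comp (differentiable_id.sub_const _).differentiableOn fun z hz => ?_).congr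
    fun z hz => periodicExtension_eq_of_mem_Ico F (Ioo_subset_Ico_self hz)
  obtain ⟨h₁, h₂⟩ := hz
  simp only [mem_preimage, sub_im, mul_im, intCast_re, I_im, mul_one, intCast_im, I_re,
    mul_zero, add_zero, mem_Ioo, id_eq]
  constructor <;> linarith

theorem differentiableAt_periodicExtension {F : ℂ → E}
    (hd : DifferentiableOn ℂ F (im ⁻¹' Ioo 0 1)) {z : ℂ} (hz : z.im ≠ ⌊z.im⌋) :
    DifferentiableAt ℂ (periodicExtension F) z :=
  (differentiableOn_periodicExtension hd ⌊z.im⌋).differentiableAt <|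
    (isOpen_Ioo.preimage continuous_im).mem_nhds
      ⟨(Int.floor_le _).lt_of_ne' hz, Int.lt_floor_add_one _⟩

theorem differentiable_periodicExtension [CompleteSpace E] {F : ℂ → E}
    (hc : ContinuousOn F (im ⁻¹' Icc 0 1)) (hd : DifferentiableOn ℂ F (im ⁻¹' Ioo 0 1))
    (hper : ∀ x : ℝ, F x = F (x + I)) :
    Differentiable ℂ (periodicExtension F) := by
  intro z
  set m := ⌊z.im⌋
  have hU : IsOpen (im ⁻¹' Ioo ((m : ℝ) - 1) (m + 1)) := isOpen_Ioo.preimage continuous_im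
  have hoff : DifferentiableOn ℂ (periodicExtension F)
      (im ⁻¹' Ioo ((m : ℝ) - 1) (m + 1) \ {u | u.im = m}) := by
    rintro u ⟨⟨hu₁, hu₂⟩, hum⟩
    refine (differentiableAt_periodicExtension hd fun h => hum ?_).differentiableWithinAt
    show u.im = m
    rw [h] at hu₁ hu₂ ⊢
    have h₁ : m - 1 < ⌊u.im⌋ := by exact_mod_cast hu₁
    have h₂ : ⌊u.im⌋ < m + 1 := by exact_mod_cast hu₂
    exact_mod_cast (by omega : ⌊u.im⌋ = m)
  exact (differentiableOn_of_differentiableOn_diff_im_eq (continuous_periodicExtension hc hper)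
    hU hoff).differentiableAt
    (hU.mem_nhds ⟨by linarith [Int.floor_le z.im], Int.lt_floor_add_one _⟩)

end PeriodicExtension

/-- Liouville-type theorem on a strip: a continuous bounded function on the closed strip
`0 ≤ Im z ≤ 1`, holomorphic on the open strip and satisfying the boundary periodicity
`F(x) = F(x + i)` for all real `x`, is constant on the strip. -/
theorem stmt_7 (F : ℂ → ℂ)
    (hc : ContinuousOn F {z : ℂ | 0 ≤ z.im ∧ z.im ≤ 1})
    (hb : ∃ C : ℝ, ∀ z ∈ {z : ℂ | 0 ≤ z.im ∧ z.im ≤ 1}, ‖F z‖ ≤ C)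
    (hd : DifferentiableOn ℂ F {z : ℂ | 0 < z.im ∧ z.im < 1})
    (hper : ∀ x : ℝ, F x = F (x + Complex.I)) :
    ∀ z ∈ {z : ℂ | 0 ≤ z.im ∧ z.im ≤ 1}, ∀ w ∈ {z : ℂ | 0 ≤ z.im ∧ z.im ≤ 1},
      F z = F w := by
  have hext : ∀ u ∈ {z : ℂ | 0 ≤ z.im ∧ z.im ≤ 1}, F u = periodicExtension F u := fun u hu => by
    simpa using (periodicExtension_eq_of_mem_Icc hper (m := 0) (by simpa using hu)).symm
  obtain ⟨C, hC⟩ := hb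
  have hbdd : Bornology.IsBounded (range (periodicExtension F)) :=
    (isBounded_iff_forall_norm_le.2 ⟨C, by rintro _ ⟨v, hv, rfl⟩; exact hC v hv⟩).subset
      (range_periodicExtension_subset F)
  intro z hz w hw
  rw [hext z hz, hext w hw]
  exact (differentiable_periodicExtension hc hd hper).apply_eq_apply_of_bounded hbdd z w
end

section
/- Let s ∈ (−1,1) and λ ∈ ℝ. Set a := u_λ(s) and b := u_λ(−s) where u_λ(x) = ((1+x) − e^{−λ}(1−x))/((1+x) + e^{−λ}(1−x)), and define x⁰ := (a+b)/2, x¹ := (a−b)/2. Then ((1+x⁰)² − (x¹)²) / ((1−x⁰)² − (x¹)²) = e^{2λ}; in particular both numerator and denominator are strictly positive, and ½·log of the ratio of the squared Lorentzian distances from the diamond's vertices (−1,0) and (1,0) to the orbit point (x⁰,x¹) equals λ. -/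
/-!
In the variable `w(x) = (1 - x)/(1 + x)`, which identifies `(-1, 1)` with `(0, ∞)`, the flow
`u_λ` is the dilation `w ↦ e^{-λ} w`; in particular it preserves `(-1, 1)`. In light-cone
coordinates the squared Lorentzian distances from `(∓1, 0)` to `(x⁰, x¹)` factor as
`(1 ± a)(1 ± b)`, so their ratio is `(w(a) w(b))⁻¹ = (e^{-2λ} w(s) w(-s))⁻¹ = e^{2λ}`,
because `w(s) w(-s) = 1`.
-/

open Real Set

/-- The conformal isotropy flow `u_λ` of the diamond with vertices `(±1, 0)`, acting on each
light-cone coordinate. -/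
noncomputable def isotropyFlow (lam x : ℝ) : ℝ :=
  ((1 + x) - exp (-lam) * (1 - x)) / ((1 + x) + exp (-lam) * (1 - x))

lemma sub_div_add_mem_Ioo {p q : ℝ} (hp : 0 < p) (hq : 0 < q) :
    (p - q) / (p + q) ∈ Ioo (-1 : ℝ) 1 := by
  have hpq : 0 < p + q := by positivity
  constructor
  · rw [lt_div_iff₀ hpq]; linarith
  · rw [div_lt_iff₀ hpq]; linarith

lemma one_sub_div_one_add_of_sub_div_add {p q : ℝ} (hpq : p + q ≠ 0) :
    (1 - (p - q) / (p + q)) / (1 + (p - q) / (p + q)) = q / p := by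
  rw [one_sub_div hpq, one_add_div hpq, div_div_div_cancel_right₀ hpq,
    show p + q - (p - q) = 2 * q by ring, show p + q + (p - q) = 2 * p by ring,
    mul_div_mul_left _ _ two_ne_zero]

lemma neg_mem_Ioo_neg_one_one {x : ℝ} (hx : x ∈ Ioo (-1 : ℝ) 1) : -x ∈ Ioo (-1 : ℝ) 1 :=
  ⟨by linarith [hx.2], by linarith [hx.1]⟩

lemma isotropyFlow_mem_Ioo (lam : ℝ) {x : ℝ} (hx : x ∈ Ioo (-1 : ℝ) 1) :
    isotropyFlow lam x ∈ Ioo (-1 : ℝ) 1 :=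
  sub_div_add_mem_Ioo (by linarith [hx.1]) (mul_pos (exp_pos _) (by linarith [hx.2]))

lemma isotropyFlow_ratio (lam : ℝ) {x : ℝ} (hx : x ∈ Ioo (-1 : ℝ) 1) :
    (1 - isotropyFlow lam x) / (1 + isotropyFlow lam x) = exp (-lam) * ((1 - x) / (1 + x)) := by
  have hp : 0 < 1 + x := by linarith [hx.1]
  have hq : 0 < exp (-lam) * (1 - x) := mul_pos (exp_pos _) (by linarith [hx.2])
  rw [isotropyFlow, one_sub_div_one_add_of_sub_div_add (by positivity), mul_div_assoc]

lemma one_add_sq_sub_sq_of_lightCone (a b : ℝ) :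
    (1 + (a + b) / 2) ^ 2 - ((a - b) / 2) ^ 2 = (1 + a) * (1 + b) := by
  ring

lemma one_sub_sq_sub_sq_of_lightCone (a b : ℝ) :
    (1 - (a + b) / 2) ^ 2 - ((a - b) / 2) ^ 2 = (1 - a) * (1 - b) := by
  ring

lemma isotropyFlow_orbit_ratio (lam : ℝ) {s : ℝ} (hs : s ∈ Ioo (-1 : ℝ) 1) :
    (1 + isotropyFlow lam s) * (1 + isotropyFlow lam (-s)) /
      ((1 - isotropyFlow lam s) * (1 - isotropyFlow lam (-s))) = exp (2 * lam) := by
  have h₁ : 0 < 1 + s := by linarith [hs.1]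
  have h₂ : 0 < 1 - s := by linarith [hs.2]
  have hw : (1 - s) / (1 + s) * ((1 - -s) / (1 + -s)) = 1 := by
    rw [sub_neg_eq_add, ← sub_eq_add_neg, div_mul_div_comm, mul_comm (1 - s),
      div_self (by positivity)]
  rw [← inv_div, mul_div_mul_comm, isotropyFlow_ratio lam hs,
    isotropyFlow_ratio lam (neg_mem_Ioo_neg_one_one hs), mul_mul_mul_comm, hw, mul_one,
    ← exp_add, ← exp_neg]
  ring_nf

/-- Orbit computation for the geometric time function on a Minkowski diamond: for the
orbit point `(x⁰, x¹)` of `(0, s)` under the conformal isotropy flow `u_λ` of the diamond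
with vertices `(±1, 0)`, the ratio of the squared Lorentzian distances to the vertices is
`e^{2λ}`, both squared distances being positive; hence half the logarithm of the ratio
equals `λ`. -/
theorem stmt_11 (s lam : ℝ) (hs : s ∈ Set.Ioo (-1 : ℝ) 1)
    (a b x0 x1 : ℝ)
    (ha : a = ((1 + s) - Real.exp (-lam) * (1 - s)) /
      ((1 + s) + Real.exp (-lam) * (1 - s)))
    (hb : b = ((1 + -s) - Real.exp (-lam) * (1 - -s)) /
      ((1 + -s) + Real.exp (-lam) * (1 - -s)))
    (hx0 : x0 = (a + b) / 2) (hx1 : x1 = (a - b) / 2) :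
    0 < (1 + x0) ^ 2 - x1 ^ 2 ∧ 0 < (1 - x0) ^ 2 - x1 ^ 2 ∧
      ((1 + x0) ^ 2 - x1 ^ 2) / ((1 - x0) ^ 2 - x1 ^ 2) = Real.exp (2 * lam) ∧
      (1 / 2) * Real.log (((1 + x0) ^ 2 - x1 ^ 2) / ((1 - x0) ^ 2 - x1 ^ 2)) = lam := by
  change a = isotropyFlow lam s at ha
  change b = isotropyFlow lam (-s) at hb
  have ⟨ha₁, ha₂⟩ := ha ▸ isotropyFlow_mem_Ioo lam hs
  have ⟨hb₁, hb₂⟩ := hb ▸ isotropyFlow_mem_Ioo lam (neg_mem_Ioo_neg_one_one hs)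
  have hratio := isotropyFlow_orbit_ratio lam hs
  rw [← ha, ← hb] at hratio
  subst hx0 hx1
  rw [one_add_sq_sub_sq_of_lightCone, one_sub_sq_sub_sq_of_lightCone, hratio, log_exp]
  refine ⟨mul_pos ?_ ?_, mul_pos ?_ ?_, rfl, by ring⟩ <;> linarith
end
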